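/- For each i = 1, 2, prey x_i of Model (1) is persistent for all r > 0: there exist constants 0 < b < B (depending only on the parameters) such that every solution of Model (1) on [0, ∞) with x_i(0) > 0 and all other components nonnegative at t = 0 satisfies b ≤ lim inf_{t→∞} x_i(t) ≤ lim sup_{t→∞} x_i(t) ≤ B. -/

import Mathlib

/-!
Every component of Model (1) has the form `z' = z H` with `H` continuous while the prey stay
above `-1`, so the nonnegative orthant is invariant and a prey that starts positive stays
positive. The prey are eventually below `K + 1` by the logistic bound, and the predators are
eventually bounded since `V' ≤ C - δ V` holds first for `ρ₂ (x₁ + y₁) + ρ₁ (x₂ + y₂)`, in which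
the migration terms cancel, and then for `yᵢ + c xᵢ`.

For the lower bound choose `ε` so small that the predator `yᵢ` decays at rate `dᵢ / 2` while
`xᵢ ≤ ε`. A stay of `xᵢ` below `ε` then lasts at most `T₀ + T₁`: after `T₀` the predator is below
the level at which `xᵢ` grows at a quarter of its intrinsic rate, and within a further `T₁` this
growth would lift `xᵢ` above `ε`. As `xᵢ` decays at most at rate `aᵢ Yᵢ` during the stay, it never
falls below `ε exp (-aᵢ Yᵢ (T₀ + T₁))`.
-/

open Filter Set Real Topology

section Comparison

variable {x fx : ℝ → ℝ} {s t γ : ℝ}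

theorem le_mul_exp_of_deriv_le_mul (hst : s ≤ t)
    (hx : ∀ u ∈ Icc s t, HasDerivAt x (fx u) u) (hfx : ∀ u ∈ Icc s t, fx u ≤ γ * x u) :
    x t ≤ x s * exp (γ * (t - s)) := by
  have h := le_gronwallBound_of_liminf_deriv_right_le (ε := 0)
    (fun u hu => (hx u hu).continuousAt.continuousWithinAt)
    (fun u hu _ hr => (hx u (Ico_subset_Icc_self hu)).hasDerivWithinAt.liminf_right_slope_le hr)
    le_rfl (fun u hu => by simpa using hfx u (Ico_subset_Icc_self hu)) t ⟨hst, le_rfl⟩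
  rwa [gronwallBound_ε0] at h

theorem mul_exp_le_of_mul_le_deriv (hst : s ≤ t)
    (hx : ∀ u ∈ Icc s t, HasDerivAt x (fx u) u) (hfx : ∀ u ∈ Icc s t, γ * x u ≤ fx u) :
    x s * exp (γ * (t - s)) ≤ x t := by
  have h := le_mul_exp_of_deriv_le_mul (x := -x) (fx := -fx) hst (fun u hu => (hx u hu).neg)
    (fun u hu => by simpa using hfx u hu)
  simp only [Pi.neg_apply, neg_mul] at h
  linarith

theorem eventually_le_of_hasDerivAt_le_sub_mul {V fV : ℝ → ℝ} {T C δ : ℝ} (hδ : 0 < δ)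
    (hV : ∀ t ≥ T, HasDerivAt V (fV t) t) (hfV : ∀ t ≥ T, fV t ≤ C - δ * V t) :
    ∀ᶠ t in atTop, V t ≤ C / δ + 1 := by
  have hle : ∀ t ≥ T, V t - C / δ ≤ (V T - C / δ) * exp (-δ * (t - T)) := fun t ht =>
    le_mul_exp_of_deriv_le_mul (x := fun u => V u - C / δ) ht
      (fun u hu => (hV u hu.1).sub_const _)
      (fun u hu => by have := hfV u hu.1; field_simp; linarith)
  have htend : Tendsto (fun t => (V T - C / δ) * exp (-δ * (t - T))) atTop (𝓝 0) := by
    have hlin := (tendsto_atTop_add_const_right _ (-T) tendsto_id).const_mul_atTop_of_neg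
      (neg_lt_zero.2 hδ)
    simpa [sub_eq_add_neg] using (tendsto_exp_atBot.comp hlin).const_mul (V T - C / δ)
  filter_upwards [htend.eventually_le_const one_pos, eventually_ge_atTop T] with t h1 ht
  linarith [hle t ht]

end Comparison

theorem exists_eq_forall_le_of_continuousOn {f : ℝ → ℝ} {a b c : ℝ} (hab : a ≤ b)
    (hf : ContinuousOn f (Icc a b)) (ha : c ≤ f a) (hb : f b ≤ c) :
    ∃ s ∈ Icc a b, f s = c ∧ ∀ v ∈ Icc s b, f v ≤ c := by
  set S := Icc a b ∩ f ⁻¹' Ici c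
  have hS : IsClosed S := hf.preimage_isClosed_of_isClosed isClosed_Icc isClosed_Ici
  have hbdd : BddAbove S := ⟨b, fun u hu => hu.1.2⟩
  have hs : sSup S ∈ S := hS.csSup_mem ⟨a, left_mem_Icc.2 hab, ha⟩ hbdd
  have hlt : ∀ v ∈ Ioc (sSup S) b, f v < c := fun v hv => not_le.1 fun hcv =>
    hv.1.not_ge (le_csSup hbdd ⟨⟨hs.1.1.trans hv.1.le, hv.2⟩, hcv⟩)
  have hle : ∀ v ∈ Icc (sSup S) b, f v ≤ c := by
    rcases hs.1.2.eq_or_lt with heq | hne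
    · intro v hv
      rw [show v = b by linarith [hv.1, hv.2]]
      exact hb
    have hclosed : IsClosed (Icc (sSup S) b ∩ f ⁻¹' Iic c) :=
      (hf.mono (Icc_subset_Icc_left hs.1.1)).preimage_isClosed_of_isClosed isClosed_Icc
        isClosed_Iic
    have hsub : Ioc (sSup S) b ⊆ Icc (sSup S) b ∩ f ⁻¹' Iic c :=
      fun v hv => ⟨Ioc_subset_Icc_self hv, (hlt v hv).le⟩
    intro v hv
    rw [← closure_Ioc hne.ne] at hv
    exact (hclosed.closure_subset_iff.2 hsub hv).2
  exact ⟨sSup S, hs.1, le_antisymm (hle _ (left_mem_Icc.2 hs.1.2)) hs.2, hle⟩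

section Kolmogorov

variable {z H : ℝ → ℝ} {s t : ℝ}

theorem nonneg_of_hasDerivAt_mul (hst : s ≤ t)
    (hz : ∀ u ∈ Icc s t, HasDerivAt z (z u * H u) u) (hH : ContinuousOn H (Icc s t))
    (hzs : 0 ≤ z s) : 0 ≤ z t := by
  by_contra! hzt
  obtain ⟨C, hC⟩ := isCompact_Icc.exists_bound_of_continuousOn hH
  have hzc : ContinuousOn z (Icc s t) := fun u hu => (hz u hu).continuousAt.continuousWithinAt
  obtain ⟨σ, hσ, hzσ⟩ := intermediate_value_Icc' hst hzc ⟨hzt.le, hzs⟩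
  -- by Grönwall, a solution of the linear equation vanishing at `σ` vanishes on `[σ, t]`
  have := eq_zero_of_abs_deriv_le_mul_abs_self_of_eq_zero_right (K := C)
    (hzc.mono (Icc_subset_Icc_left hσ.1))
    (fun u hu => (hz u ⟨hσ.1.trans hu.1, hu.2.le⟩).hasDerivWithinAt) hzσ
    (fun u hu => by
      rw [norm_mul, mul_comm]
      exact mul_le_mul_of_nonneg_right (hC u ⟨hσ.1.trans hu.1, hu.2.le⟩) (norm_nonneg _))
    t ⟨hσ.2, le_rfl⟩
  exact hzt.ne this

theorem pos_of_hasDerivAt_mul (hst : s ≤ t)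
    (hz : ∀ u ∈ Icc s t, HasDerivAt z (z u * H u) u) (hH : ContinuousOn H (Icc s t))
    (hzs : 0 < z s) : 0 < z t := by
  obtain ⟨C, hC⟩ := isCompact_Icc.exists_bound_of_continuousOn hH
  have hnn : ∀ u ∈ Icc s t, 0 ≤ z u := fun u hu =>
    nonneg_of_hasDerivAt_mul hu.1 (fun v hv => hz v ⟨hv.1, hv.2.trans hu.2⟩)
      (hH.mono (Icc_subset_Icc_right hu.2)) hzs.le
  have := mul_exp_le_of_mul_le_deriv (γ := -C) hst hz fun u hu => by
    have := neg_le_of_abs_le (hC u hu)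
    nlinarith [hnn u hu]
  exact lt_of_lt_of_le (by positivity) this

theorem nonneg_of_forall_hasDerivAt_mul {ι : Type*} {z H : ι → ℝ → ℝ}
    (hz : ∀ i, ∀ t ≥ 0, HasDerivAt (z i) (z i t * H i t) t)
    (hH : ∀ t ≥ 0, (∀ i, 0 ≤ z i t) → ∀ᶠ u in 𝓝[≥] t, ∀ i, ContinuousAt (H i) u)
    (h0 : ∀ i, 0 ≤ z i 0) : ∀ t ≥ 0, ∀ i, 0 ≤ z i t := by
  intro t ht i
  set S := {u | ∀ i, 0 ≤ z i u}
  have hclosed : IsClosed (S ∩ Icc 0 t) := by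
    rw [inter_comm]
    convert (continuousOn_pi.2 fun i u hu => (hz i u hu.1).continuousAt.continuousWithinAt)
      |>.preimage_isClosed_of_isClosed isClosed_Icc
        (isClosed_set_pi (i := univ) (s := fun _ => Ici 0) fun _ _ => isClosed_Ici)
    ext u
    simp [S, Pi.le_def]
  refine hclosed.Icc_subset_of_forall_mem_nhdsWithin h0 (fun u hu => ?_) ⟨ht, le_rfl⟩ i
  obtain ⟨w, huw, hw⟩ := mem_nhdsGE_iff_exists_Icc_subset.1 (hH u hu.2.1 hu.1)
  refine mem_of_superset (Ioo_mem_nhdsGT huw) fun v hv j => ?_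
  exact nonneg_of_hasDerivAt_mul hv.1.le
    (fun v' hv' => hz j v' (hu.2.1.trans hv'.1))
    (fun v' hv' => (hw ⟨hv'.1, hv'.2.trans hv.2.le⟩ j).continuousWithinAt) (hu.1 j)

end Kolmogorov

structure LowPreyDynamics (x y R S : ℝ → ℝ) (T ε Y C ν η μ : ℝ) : Prop where
  hasDerivAt_prey : ∀ t ≥ T, HasDerivAt x (x t * R t) t
  hasDerivAt_predator : ∀ t ≥ T, HasDerivAt y (y t * S t) t
  prey_pos : ∀ t ≥ T, 0 < x t
  predator_nonneg : ∀ t ≥ T, 0 ≤ y t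
  predator_le : ∀ t ≥ T, y t ≤ Y
  neg_le_preyRate : ∀ t ≥ T, x t ≤ ε → -C ≤ R t
  le_preyRate : ∀ t ≥ T, x t ≤ ε → y t ≤ η → ν ≤ R t
  predatorRate_le : ∀ t ≥ T, x t ≤ ε → S t ≤ -μ

namespace LowPreyDynamics

variable {x y R S : ℝ → ℝ} {T ε Y C ν η μ T₀ T₁ s u : ℝ}

theorem predator_le_mul_exp (h : LowPreyDynamics x y R S T ε Y C ν η μ) (hs : T ≤ s)
    (hsu : s ≤ u) (hlow : ∀ v ∈ Icc s u, x v ≤ ε) : y u ≤ Y * exp (-μ * (u - s)) := by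
  refine (le_mul_exp_of_deriv_le_mul hsu (fun v hv => h.hasDerivAt_predator v (hs.trans hv.1))
    fun v hv => ?_).trans (mul_le_mul_of_nonneg_right (h.predator_le s hs) (exp_pos _).le)
  have := h.predatorRate_le v (hs.trans hv.1) (hlow v hv)
  have := h.predator_nonneg v (hs.trans hv.1)
  nlinarith

theorem mul_exp_le_prey (h : LowPreyDynamics x y R S T ε Y C ν η μ) (hs : T ≤ s)
    (hsu : s ≤ u) (hlow : ∀ v ∈ Icc s u, x v ≤ ε) : x s * exp (-C * (u - s)) ≤ x u := by
  refine mul_exp_le_of_mul_le_deriv hsu (fun v hv => h.hasDerivAt_prey v (hs.trans hv.1))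
    fun v hv => ?_
  have := h.neg_le_preyRate v (hs.trans hv.1) (hlow v hv)
  have := h.prey_pos v (hs.trans hv.1)
  nlinarith

theorem mul_exp_le_prey_of_predator_le (h : LowPreyDynamics x y R S T ε Y C ν η μ)
    (hs : T ≤ s) (hsu : s ≤ u) (hlow : ∀ v ∈ Icc s u, x v ≤ ε ∧ y v ≤ η) :
    x s * exp (ν * (u - s)) ≤ x u := by
  refine mul_exp_le_of_mul_le_deriv hsu (fun v hv => h.hasDerivAt_prey v (hs.trans hv.1))
    fun v hv => ?_
  have := h.le_preyRate v (hs.trans hv.1) (hlow v hv).1 (hlow v hv).2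
  have := h.prey_pos v (hs.trans hv.1)
  nlinarith

theorem predator_le_of_add_le (h : LowPreyDynamics x y R S T ε Y C ν η μ) (hμ : 0 ≤ μ)
    (hT₀ : 0 ≤ T₀) (hYT₀ : Y * exp (-μ * T₀) ≤ η) (hs : T ≤ s) (hsu : s + T₀ ≤ u)
    (hlow : ∀ v ∈ Icc s u, x v ≤ ε) : y u ≤ η := by
  have hY : 0 ≤ Y := (h.predator_nonneg s hs).trans (h.predator_le s hs)
  calc y u ≤ Y * exp (-μ * (u - s)) := h.predator_le_mul_exp hs (by linarith) hlow
    _ ≤ Y * exp (-μ * T₀) := mul_le_mul_of_nonneg_left (exp_le_exp.2 (by nlinarith)) hY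
    _ ≤ η := hYT₀

theorem exists_lt_prey (h : LowPreyDynamics x y R S T ε Y C ν η μ) (hμ : 0 ≤ μ) (hν : 0 < ν)
    (hT₀ : 0 ≤ T₀) (hYT₀ : Y * exp (-μ * T₀) ≤ η) (hs : T ≤ s) : ∃ u ≥ s, ε < x u := by
  by_contra! hlow
  have hs₀ : T ≤ s + T₀ := by linarith
  have hgrow : Tendsto (fun u => x (s + T₀) * exp (ν * (u - (s + T₀)))) atTop atTop :=
    (tendsto_exp_atTop.comp (by simpa [sub_eq_add_neg] using
      (tendsto_atTop_add_const_right _ (-(s + T₀)) tendsto_id).const_mul_atTop hν)).const_mul_atTop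
      (h.prey_pos _ hs₀)
  obtain ⟨u, hεu, hu⟩ := ((hgrow.eventually_gt_atTop ε).and (eventually_ge_atTop (s + T₀))).exists
  refine hεu.not_ge ((h.mul_exp_le_prey_of_predator_le hs₀ hu fun v hv => ?_).trans
    (hlow u (by linarith)))
  exact ⟨hlow v (by linarith [hv.1]), h.predator_le_of_add_le hμ hT₀ hYT₀ hs hv.1
    fun w hw => hlow w hw.1⟩

theorem sub_le_of_prey_le (h : LowPreyDynamics x y R S T ε Y C ν η μ) (hμ : 0 ≤ μ)
    (hν : 0 < ν) (hC : 0 ≤ C) (hT₀ : 0 ≤ T₀) (hYT₀ : Y * exp (-μ * T₀) ≤ η)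
    (hT₁ : C * T₀ < ν * T₁) (hs : T ≤ s) (hsu : s ≤ u) (hxs : ε ≤ x s)
    (hlow : ∀ v ∈ Icc s u, x v ≤ ε) : u - s ≤ T₀ + T₁ := by
  by_contra! hlen
  have hε : 0 < ε := (h.prey_pos s hs).trans_le (hlow s ⟨le_rfl, hsu⟩)
  have hT₁₀ : 0 < T₁ := (pos_iff_pos_of_mul_pos ((mul_nonneg hC hT₀).trans_lt hT₁)).1 hν
  -- after `T₀` the predator is below `η`, and growth during `T₁` lifts the prey above `ε`
  set m := s + T₀ + T₁
  have hx₀ : ε * exp (-C * T₀) ≤ x (s + T₀) := by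
    have := h.mul_exp_le_prey (u := s + T₀) hs (by linarith) fun v hv =>
      hlow v ⟨hv.1, by linarith [hv.2]⟩
    rw [add_sub_cancel_left] at this
    exact (mul_le_mul_of_nonneg_right hxs (exp_pos _).le).trans this
  have hxm : x (s + T₀) * exp (ν * T₁) ≤ x m := by
    have := h.mul_exp_le_prey_of_predator_le (s := s + T₀) (u := m) (by linarith) (by linarith)
      fun v hv => ⟨hlow v ⟨by linarith [hv.1], by linarith [hv.2]⟩,
        h.predator_le_of_add_le hμ hT₀ hYT₀ hs hv.1 fun w hw =>
          hlow w ⟨hw.1, by linarith [hv.2, hw.2]⟩⟩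
    rwa [show m - (s + T₀) = T₁ by ring] at this
  have hgain : 1 < exp (-C * T₀) * exp (ν * T₁) := by
    rw [← exp_add, one_lt_exp_iff]
    linarith
  have := (mul_le_mul_of_nonneg_right hx₀ (exp_pos _).le).trans hxm
  nlinarith [hlow m ⟨by linarith, by linarith⟩]

theorem eventually_le_prey (h : LowPreyDynamics x y R S T ε Y C ν η μ) (hε : 0 < ε)
    (hμ : 0 ≤ μ) (hν : 0 < ν) (hC : 0 ≤ C) (hT₀ : 0 ≤ T₀) (hYT₀ : Y * exp (-μ * T₀) ≤ η)
    (hT₁ : C * T₀ < ν * T₁) : ∀ᶠ t in atTop, ε * exp (-C * (T₀ + T₁)) ≤ x t := by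
  have hT₁₀ : 0 < T₁ := (pos_iff_pos_of_mul_pos ((mul_nonneg hC hT₀).trans_lt hT₁)).1 hν
  obtain ⟨t₀, ht₀, hεt₀⟩ := h.exists_lt_prey hμ hν hT₀ hYT₀ le_rfl
  filter_upwards [eventually_ge_atTop t₀] with t ht
  rcases le_or_gt ε (x t) with hεt | hεt
  · refine le_trans ?_ hεt
    exact mul_le_of_le_one_right hε.le (exp_le_one_iff.2 (by nlinarith))
  obtain ⟨s, hs, hxs, hlow⟩ := exists_eq_forall_le_of_continuousOn ht
    (fun v hv => (h.hasDerivAt_prey v (ht₀.trans hv.1)).continuousAt.continuousWithinAt)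
    hεt₀.le hεt.le
  have hlen := h.sub_le_of_prey_le hμ hν hC hT₀ hYT₀ hT₁ (ht₀.trans hs.1) hs.2 hxs.ge hlow
  calc ε * exp (-C * (T₀ + T₁)) ≤ x s * exp (-C * (t - s)) := by
        rw [hxs]; exact mul_le_mul_of_nonneg_left (exp_le_exp.2 (by nlinarith)) hε.le
    _ ≤ x t := h.mul_exp_le_prey (ht₀.trans hs.1) hs.2 hlow

end LowPreyDynamics

section Rates

variable {g K a d ρ a' x y x' y' : ℝ}

noncomputable def preyRate (g K a x y : ℝ) : ℝ := g * (1 - x / K) - a * y / (1 + x)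

noncomputable def predatorRate (a d ρ a' x x' y' : ℝ) : ℝ :=
  a * x / (1 + x) - d + ρ * (a * x * y' / (1 + x) - a' * x' * y' / (1 + x'))

theorem neg_mul_le_preyRate {Y : ℝ} (hg : 0 ≤ g) (hK : 0 < K) (ha : 0 ≤ a) (hx : 0 ≤ x)
    (hxK : x ≤ K) (hy₀ : 0 ≤ y) (hy : y ≤ Y) : -(a * Y) ≤ preyRate g K a x y := by
  have h₁ : a * y / (1 + x) ≤ a * Y := by
    rw [div_le_iff₀ (by linarith)]
    nlinarith [mul_le_mul_of_nonneg_left hy ha, mul_nonneg (mul_nonneg ha hy₀) hx]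
  have h₂ : 0 ≤ g * (1 - x / K) := mul_nonneg hg (by rw [sub_nonneg, div_le_one hK]; exact hxK)
  unfold preyRate
  linarith

theorem le_preyRate (hg : 0 ≤ g) (hK : 0 < K) (ha : 0 < a) (hx : 0 ≤ x) (hxK : x ≤ K / 2)
    (hy : y ≤ g / (4 * a)) : g / 4 ≤ preyRate g K a x y := by
  have h₁ : a * y / (1 + x) ≤ g / 4 := by
    rw [div_le_iff₀ (by linarith)]
    have : a * y ≤ g / 4 := by rw [le_div_iff₀ (by positivity)] at hy; linarith
    nlinarith
  have h₂ : g / 2 ≤ g * (1 - x / K) := by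
    have : x / K ≤ 1 / 2 := by rw [div_le_iff₀ hK]; linarith
    nlinarith
  unfold preyRate
  linarith

theorem predatorRate_le {ε M : ℝ} (ha : 0 ≤ a) (hρ : 0 ≤ ρ) (ha' : 0 ≤ a') (hx : 0 ≤ x)
    (hxε : x ≤ ε) (hx' : 0 ≤ x') (hy' : 0 ≤ y') (hM : ρ * y' ≤ M)
    (hε : a * ε * (1 + M) ≤ d / 2) : predatorRate a d ρ a' x x' y' ≤ -(d / 2) := by
  have h₁ : a * x / (1 + x) + ρ * (a * x * y' / (1 + x)) ≤ a * ε * (1 + M) := by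
    rw [← mul_div_assoc, ← add_div, div_le_iff₀ (by linarith)]
    have : 0 ≤ a * x := mul_nonneg ha hx
    have : a * x * (1 + ρ * y') ≤ a * ε * (1 + M) := by
      apply mul_le_mul (mul_le_mul_of_nonneg_left hxε ha) (by linarith) (by positivity)
      nlinarith
    nlinarith [mul_nonneg (mul_nonneg ha hx) (mul_nonneg hρ hy')]
  have h₂ : 0 ≤ ρ * (a' * x' * y' / (1 + x')) := by
    have : 0 ≤ 1 + x' := by linarith
    positivity
  unfold predatorRate
  linarith

theorem continuousAt_preyRate {x y : ℝ → ℝ} {u : ℝ} (hx : ContinuousAt x u)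
    (hy : ContinuousAt y u) (h : 1 + x u ≠ 0) :
    ContinuousAt (fun t => preyRate g K a (x t) (y t)) u := by
  unfold preyRate
  fun_prop (disch := assumption)

theorem continuousAt_predatorRate {x x' y' : ℝ → ℝ} {u : ℝ} (hx : ContinuousAt x u)
    (hx' : ContinuousAt x' u) (hy' : ContinuousAt y' u) (h : 1 + x u ≠ 0) (h' : 1 + x' u ≠ 0) :
    ContinuousAt (fun t => predatorRate a d ρ a' (x t) (x' t) (y' t)) u := by
  unfold predatorRate
  fun_prop (disch := assumption)

theorem logistic_add_mul_le (hg : 0 < g) (hK : 0 < K) (δ x : ℝ) :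
    g * x * (1 - x / K) + δ * x ≤ K * (g + δ) ^ 2 / (4 * g) := by
  have key : K * (g + δ) ^ 2 / (4 * g) - (g * x * (1 - x / K) + δ * x)
      = (2 * g * x - K * (g + δ)) ^ 2 / (4 * g * K) := by
    field_simp
    ring
  have : 0 ≤ (2 * g * x - K * (g + δ)) ^ 2 / (4 * g * K) := by positivity
  linarith

end Rates

/-- One patch of Model (1) with prey growth rate `g`, where `x'`, `y'` belong to the other patch:
Model (1) is `IsPatchSolution 1 K₁ a₁ d₁ ρ₁ a₂ x₁ y₁ x₂ y₂` together with
`IsPatchSolution r K₂ a₂ d₂ ρ₂ a₁ x₂ y₂ x₁ y₁`. -/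
structure IsPatchSolution (g K a d ρ a' : ℝ) (x y x' y' : ℝ → ℝ) : Prop where
  prey : ∀ t ≥ 0, HasDerivAt x (g * x t * (1 - x t / K) - a * x t * y t / (1 + x t)) t
  predator : ∀ t ≥ 0, HasDerivAt y (a * x t * y t / (1 + x t) - d * y t +
    ρ * (a * x t * y t * y' t / (1 + x t) - a' * x' t * y t * y' t / (1 + x' t))) t

namespace IsPatchSolution

variable {g K a d ρ a' : ℝ} {x y x' y' : ℝ → ℝ}

theorem hasDerivAt_prey_mul (P : IsPatchSolution g K a d ρ a' x y x' y') :
    ∀ t ≥ 0, HasDerivAt x (x t * preyRate g K a (x t) (y t)) t := fun t ht =>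
  (P.prey t ht).congr_deriv (by unfold preyRate; ring)

theorem hasDerivAt_predator_mul (P : IsPatchSolution g K a d ρ a' x y x' y') :
    ∀ t ≥ 0, HasDerivAt y (y t * predatorRate a d ρ a' (x t) (x' t) (y' t)) t := fun t ht =>
  (P.predator t ht).congr_deriv (by unfold predatorRate; ring)

theorem prey_pos (P : IsPatchSolution g K a d ρ a' x y x' y') (hx : ∀ t ≥ 0, 0 ≤ x t)
    (hx₀ : 0 < x 0) : ∀ t ≥ 0, 0 < x t := fun t ht =>
  pos_of_hasDerivAt_mul ht (fun u hu => P.hasDerivAt_prey_mul u hu.1)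
    (fun u hu => (continuousAt_preyRate (P.prey u hu.1).continuousAt
      (P.predator u hu.1).continuousAt (by linarith [hx u hu.1])).continuousWithinAt) hx₀

theorem eventually_prey_le (P : IsPatchSolution g K a d ρ a' x y x' y') (hg : 0 < g)
    (hK : 0 < K) (ha : 0 ≤ a) (hx : ∀ t ≥ 0, 0 ≤ x t) (hy : ∀ t ≥ 0, 0 ≤ y t) :
    ∀ᶠ t in atTop, x t ≤ K + 1 := by
  have h := eventually_le_of_hasDerivAt_le_sub_mul (C := g * K) hg P.prey fun t ht => by
    have := logistic_add_mul_le hg hK g (x t)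
    have : 0 ≤ a * x t * y t / (1 + x t) := by
      have := hx t ht; have := hy t ht
      have : 0 ≤ 1 + x t := by linarith
      positivity
    have : K * (g + g) ^ 2 / (4 * g) = g * K := by field_simp; ring
    linarith
  rwa [mul_div_cancel_left₀ _ hg.ne'] at h

theorem eventually_predator_le (P : IsPatchSolution g K a d ρ a' x y x' y') (hg : 0 < g)
    (hK : 0 < K) (ha : 0 ≤ a) (hd : 0 < d) (hρ : 0 ≤ ρ) (ha' : 0 ≤ a') {M : ℝ} (hM₀ : 0 ≤ M)
    (hx : ∀ t ≥ 0, 0 ≤ x t) (hy : ∀ t ≥ 0, 0 ≤ y t) (hx' : ∀ t ≥ 0, 0 ≤ x' t)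
    (hy' : ∀ t ≥ 0, 0 ≤ y' t) (hM : ∀ᶠ t in atTop, ρ * y' t ≤ M) :
    ∀ᶠ t in atTop, y t ≤ (1 + M) * (K * (g + d) ^ 2 / (4 * g)) / d + 1 := by
  obtain ⟨T, hT⟩ := eventually_atTop.1 (hM.and (eventually_ge_atTop 0))
  -- `y + (1 + M) x` dissipates: predation gains of `y` are losses of `x`
  have h := eventually_le_of_hasDerivAt_le_sub_mul (V := fun t => y t + (1 + M) * x t)
    (C := (1 + M) * (K * (g + d) ^ 2 / (4 * g))) hd
    (fun t ht => (P.predator t (hT t ht).2).add ((P.prey t (hT t ht).2).const_mul _))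
    fun t ht => by
      obtain ⟨hρy', ht₀⟩ := hT t ht
      have := hx t ht₀; have := hy t ht₀; have := hx' t ht₀; have := hy' t ht₀
      have : 0 ≤ 1 + x t := by linarith
      have : 0 ≤ 1 + x' t := by linarith
      have hA : 0 ≤ a * x t * y t / (1 + x t) := by positivity
      have hB : 0 ≤ ρ * (a' * x' t * y t * y' t / (1 + x' t)) := by positivity
      have hlog := mul_le_mul_of_nonneg_left (logistic_add_mul_le hg hK d (x t))
        (by linarith : 0 ≤ 1 + M)
      have hgain := mul_nonpos_of_nonneg_of_nonpos hA (by linarith : ρ * y' t - M ≤ 0)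
      linear_combination hlog + hgain + hB
  filter_upwards [h, eventually_ge_atTop 0] with t ht ht₀
  nlinarith [hx t ht₀]

end IsPatchSolution

section TwoPatches

variable {g K a d ρ a' g' K' d' ρ' : ℝ} {x y x' y' : ℝ → ℝ}

theorem IsPatchSolution.nonneg (P : IsPatchSolution g K a d ρ a' x y x' y')
    (P' : IsPatchSolution g' K' a' d' ρ' a x' y' x y) (hx₀ : 0 ≤ x 0) (hy₀ : 0 ≤ y 0)
    (hx'₀ : 0 ≤ x' 0) (hy'₀ : 0 ≤ y' 0) :
    (∀ t ≥ 0, 0 ≤ x t) ∧ (∀ t ≥ 0, 0 ≤ y t) ∧ (∀ t ≥ 0, 0 ≤ x' t) ∧ (∀ t ≥ 0, 0 ≤ y' t) := by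
  have key := nonneg_of_forall_hasDerivAt_mul (z := ![x, y, x', y'])
    (H := ![fun t => preyRate g K a (x t) (y t),
      fun t => predatorRate a d ρ a' (x t) (x' t) (y' t),
      fun t => preyRate g' K' a' (x' t) (y' t),
      fun t => predatorRate a' d' ρ' a (x' t) (x t) (y t)])
    (fun i => by
      fin_cases i
      exacts [P.hasDerivAt_prey_mul, P.hasDerivAt_predator_mul, P'.hasDerivAt_prey_mul,
        P'.hasDerivAt_predator_mul])
    (fun t ht hz => by
      have hxt : 0 ≤ x t := hz 0
      have hx't : 0 ≤ x' t := hz 2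
      have hx : ∀ᶠ u in 𝓝 t, -1 < x u :=
        (P.prey t ht).continuousAt.eventually_const_lt (by linarith)
      have hx' : ∀ᶠ u in 𝓝 t, -1 < x' u :=
        (P'.prey t ht).continuousAt.eventually_const_lt (by linarith)
      filter_upwards [self_mem_nhdsWithin, nhdsWithin_le_nhds (hx.and hx')] with u htu hxu i
      have hu : 0 ≤ u := ht.trans htu
      have cx := (P.prey u hu).continuousAt
      have cy := (P.predator u hu).continuousAt
      have cx' := (P'.prey u hu).continuousAt
      have cy' := (P'.predator u hu).continuousAt
      have h : 1 + x u ≠ 0 := by linarith [hxu.1]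
      have h' : 1 + x' u ≠ 0 := by linarith [hxu.2]
      fin_cases i
      exacts [continuousAt_preyRate cx cy h, continuousAt_predatorRate cx cx' cy' h h',
        continuousAt_preyRate cx' cy' h', continuousAt_predatorRate cx' cx cy h' h])
    (fun i => by fin_cases i <;> assumption)
  exact ⟨fun t ht => key t ht 0, fun t ht => key t ht 1, fun t ht => key t ht 2,
    fun t ht => key t ht 3⟩

theorem IsPatchSolution.eventually_mul_predator_le (P : IsPatchSolution g K a d ρ a' x y x' y')
    (P' : IsPatchSolution g' K' a' d' ρ' a x' y' x y) (hg : 0 < g) (hg' : 0 < g') (hK : 0 < K)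
    (hK' : 0 < K') (hd : 0 < d) (hd' : 0 < d') (hρ : 0 ≤ ρ) (hρ' : 0 ≤ ρ')
    (hx : ∀ t ≥ 0, 0 ≤ x t) (hy : ∀ t ≥ 0, 0 ≤ y t) (hx' : ∀ t ≥ 0, 0 ≤ x' t)
    (hy' : ∀ t ≥ 0, 0 ≤ y' t) :
    ∀ᶠ t in atTop,
      ρ * y' t ≤ (ρ' * (K * (g + min d d') ^ 2 / (4 * g)) +
        ρ * (K' * (g' + min d d') ^ 2 / (4 * g'))) / min d d' + 1 ∧
      ρ' * y t ≤ (ρ' * (K * (g + min d d') ^ 2 / (4 * g)) +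
        ρ * (K' * (g' + min d d') ^ 2 / (4 * g'))) / min d d' + 1 := by
  set δ := min d d'
  have h := eventually_le_of_hasDerivAt_le_sub_mul (T := 0) (lt_min hd hd')
    (C := ρ' * (K * (g + δ) ^ 2 / (4 * g)) + ρ * (K' * (g' + δ) ^ 2 / (4 * g')))
    (V := fun t => ρ' * (x t + y t) + ρ * (x' t + y' t))
    (fun t ht => (((P.prey t ht).add (P.predator t ht)).const_mul ρ').add
      (((P'.prey t ht).add (P'.predator t ht)).const_mul ρ)) fun t ht => by
    have h₁ := mul_le_mul_of_nonneg_left (logistic_add_mul_le hg hK δ (x t)) hρ'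
    have h₂ := mul_le_mul_of_nonneg_left (logistic_add_mul_le hg' hK' δ (x' t)) hρ
    have h₃ := mul_le_mul_of_nonneg_left
      (mul_le_mul_of_nonneg_right (min_le_left d d') (hy t ht)) hρ'
    have h₄ := mul_le_mul_of_nonneg_left
      (mul_le_mul_of_nonneg_right (min_le_right d d') (hy' t ht)) hρ
    linear_combination h₁ + h₂ + h₃ + h₄
  filter_upwards [h, eventually_ge_atTop 0] with t ht ht₀
  have := mul_nonneg hρ' (hx t ht₀)
  have := mul_nonneg hρ (hx' t ht₀)
  have := mul_nonneg hρ' (hy t ht₀)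
  have := mul_nonneg hρ (hy' t ht₀)
  constructor <;> linarith

end TwoPatches

theorem le_liminf_and_limsup_le {α : Type*} {l : Filter α} [l.NeBot] {f : α → ℝ} {b B : ℝ}
    (hb : ∀ᶠ t in l, b ≤ f t) (hB : ∀ᶠ t in l, f t ≤ B) : b ≤ liminf f l ∧ limsup f l ≤ B :=
  ⟨le_liminf_of_le (IsBoundedUnder.isCoboundedUnder_ge ⟨B, hB⟩) hb,
    limsup_le_of_le (IsBoundedUnder.isCoboundedUnder_le ⟨b, hb⟩) hB⟩

section Persistence

variable {g K a d ρ a' g' K' d' ρ' : ℝ}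

theorem IsPatchSolution.lowPreyDynamics {x y x' y' : ℝ → ℝ}
    (P : IsPatchSolution g K a d ρ a' x y x' y') (hg : 0 < g) (hK : 0 < K) (ha : 0 < a)
    (hρ : 0 ≤ ρ) (ha' : 0 ≤ a') {T ε Y M : ℝ} (hT : 0 ≤ T) (hεK : ε ≤ K / 2)
    (hεd : a * ε * (1 + M) ≤ d / 2) (hx : ∀ t ≥ 0, 0 < x t) (hy : ∀ t ≥ 0, 0 ≤ y t)
    (hx' : ∀ t ≥ 0, 0 ≤ x' t) (hy' : ∀ t ≥ 0, 0 ≤ y' t) (hyY : ∀ t ≥ T, y t ≤ Y)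
    (hM : ∀ t ≥ T, ρ * y' t ≤ M) :
    LowPreyDynamics x y (fun t => preyRate g K a (x t) (y t))
      (fun t => predatorRate a d ρ a' (x t) (x' t) (y' t)) T ε Y (a * Y) (g / 4)
      (g / (4 * a)) (d / 2) where
  hasDerivAt_prey t ht := P.hasDerivAt_prey_mul t (hT.trans ht)
  hasDerivAt_predator t ht := P.hasDerivAt_predator_mul t (hT.trans ht)
  prey_pos t ht := hx t (hT.trans ht)
  predator_nonneg t ht := hy t (hT.trans ht)
  predator_le := hyY
  neg_le_preyRate t ht hxε := neg_mul_le_preyRate hg.le hK ha.le (hx t (hT.trans ht)).le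
    (by linarith) (hy t (hT.trans ht)) (hyY t ht)
  le_preyRate t ht hxε hyη := le_preyRate hg.le hK ha (hx t (hT.trans ht)).le
    (hxε.trans hεK) hyη
  predatorRate_le t ht hxε := predatorRate_le ha.le hρ ha' (hx t (hT.trans ht)).le hxε
    (hx' t (hT.trans ht)) (hy' t (hT.trans ht)) (hM t ht) hεd

theorem exists_eventually_le_prey (hg : 0 < g) (hK : 0 < K) (ha : 0 < a) (hd : 0 < d)
    (hρ : 0 ≤ ρ) (ha' : 0 ≤ a') {M : ℝ} (hM₀ : 0 ≤ M) :
    ∃ b > 0, b < K + 1 ∧ ∀ x y x' y' : ℝ → ℝ, IsPatchSolution g K a d ρ a' x y x' y' →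
      (∀ t ≥ 0, 0 < x t) → (∀ t ≥ 0, 0 ≤ y t) → (∀ t ≥ 0, 0 ≤ x' t) → (∀ t ≥ 0, 0 ≤ y' t) →
      (∀ᶠ t in atTop, ρ * y' t ≤ M) → ∀ᶠ t in atTop, b ≤ x t := by
  set Y := (1 + M) * (K * (g + d) ^ 2 / (4 * g)) / d + 1
  set ε := min (K / 2) (d / (2 * a * (1 + M)))
  have hY : 0 < Y := by positivity
  have hε : 0 < ε := lt_min (by positivity) (by positivity)
  have hεd : a * ε * (1 + M) ≤ d / 2 := by
    have := min_le_right (K / 2) (d / (2 * a * (1 + M)))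
    rw [le_div_iff₀ (by positivity)] at this
    linarith
  obtain ⟨T₀, hT₀, hYT₀⟩ : ∃ T₀ ≥ 0, Y * exp (-(d / 2) * T₀) ≤ g / (4 * a) := by
    have : Tendsto (fun T => Y * exp (-(d / 2) * T)) atTop (𝓝 0) := by
      simpa using (tendsto_exp_atBot.comp
        (tendsto_id.const_mul_atTop_of_neg (by linarith : -(d / 2) < 0))).const_mul Y
    exact ((eventually_ge_atTop 0).and (this.eventually_le_const (by positivity))).exists
  set T₁ := (a * Y * T₀ + 1) / (g / 4)
  have hT₁ : a * Y * T₀ < g / 4 * T₁ := by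
    rw [mul_div_cancel₀ _ (by positivity)]
    linarith
  refine ⟨ε * exp (-(a * Y) * (T₀ + T₁)), by positivity, ?_, ?_⟩
  · have : exp (-(a * Y) * (T₀ + T₁)) ≤ 1 := exp_le_one_iff.2 (by
      have : 0 ≤ T₁ := by positivity
      nlinarith [mul_pos ha hY])
    nlinarith [min_le_left (K / 2) (d / (2 * a * (1 + M)))]
  intro x y x' y' P hx hy hx' hy' hM
  obtain ⟨T, hT⟩ := eventually_atTop.1
    ((hM.and (P.eventually_predator_le hg hK ha.le hd hρ ha' hM₀ (fun t ht => (hx t ht).le) hy hx'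
      hy' hM)).and (eventually_ge_atTop 0))
  have h := P.lowPreyDynamics hg hK ha hρ ha' (le_max_right T 0) (min_le_left _ _) hεd hx hy hx'
    hy' (fun t ht => (hT t ((le_max_left T 0).trans ht)).1.2)
    (fun t ht => (hT t ((le_max_left T 0).trans ht)).1.1)
  exact h.eventually_le_prey hε (by positivity) (by positivity) (by positivity) hT₀ hYT₀ hT₁

theorem exists_le_liminf_prey (hg : 0 < g) (hg' : 0 < g') (hK : 0 < K) (hK' : 0 < K')
    (ha : 0 < a) (ha' : 0 < a') (hd : 0 < d) (hd' : 0 < d') (hρ : 0 ≤ ρ) (hρ' : 0 ≤ ρ') :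
    ∃ b B : ℝ, 0 < b ∧ b < B ∧ ∀ x y x' y' : ℝ → ℝ,
      IsPatchSolution g K a d ρ a' x y x' y' → IsPatchSolution g' K' a' d' ρ' a x' y' x y →
      0 < x 0 → 0 ≤ y 0 → 0 ≤ x' 0 → 0 ≤ y' 0 → b ≤ liminf x atTop ∧ limsup x atTop ≤ B := by
  obtain ⟨b, hb, hbK, hlow⟩ := exists_eventually_le_prey hg hK ha hd hρ ha'.le
    (M := (ρ' * (K * (g + min d d') ^ 2 / (4 * g)) +
      ρ * (K' * (g' + min d d') ^ 2 / (4 * g'))) / min d d' + 1)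
    (by have := lt_min hd hd'; positivity)
  refine ⟨b, K + 1, hb, hbK, fun x y x' y' P P' hx₀ hy₀ hx'₀ hy'₀ => ?_⟩
  obtain ⟨hx, hy, hx', hy'⟩ := P.nonneg P' hx₀.le hy₀ hx'₀ hy'₀
  have hM := (P.eventually_mul_predator_le P' hg hg' hK hK' hd hd' hρ hρ' hx hy hx' hy').mono
    fun _ h => h.1
  exact le_liminf_and_limsup_le (hlow x y x' y' P (P.prey_pos hx hx₀) hy hx' hy' hM)
    (P.eventually_prey_le hg hK ha.le hx hy)

end Persistence

/-- **Persistence of both prey in Model (1).**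
For each `i = 1, 2`, there exist constants `0 < b < B`, depending only on the
parameters, such that every solution of Model (1) with `xᵢ(0) > 0` and the
other components nonnegative at `t = 0` satisfies
`b ≤ liminf_{t→∞} xᵢ(t) ≤ limsup_{t→∞} xᵢ(t) ≤ B`. -/
theorem model1_prey_persistent
    (r a1 a2 K1 K2 d1 d2 ρ1 ρ2 : ℝ)
    (hr : 0 < r) (ha1 : 0 < a1) (ha2 : 0 < a2) (hK1 : 0 < K1) (hK2 : 0 < K2)
    (hd1 : 0 < d1) (hd2 : 0 < d2) (hρ1 : 0 ≤ ρ1) (hρ2 : 0 ≤ ρ2) :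
    (∃ b B : ℝ, 0 < b ∧ b < B ∧
      ∀ x1 y1 x2 y2 : ℝ → ℝ,
        (∀ t : ℝ, 0 ≤ t → HasDerivAt x1
          (x1 t * (1 - x1 t / K1) - a1 * x1 t * y1 t / (1 + x1 t)) t) →
        (∀ t : ℝ, 0 ≤ t → HasDerivAt y1
          (a1 * x1 t * y1 t / (1 + x1 t) - d1 * y1 t +
            ρ1 * (a1 * x1 t * y1 t * y2 t / (1 + x1 t) -
                  a2 * x2 t * y1 t * y2 t / (1 + x2 t))) t) →
        (∀ t : ℝ, 0 ≤ t → HasDerivAt x2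
          (r * x2 t * (1 - x2 t / K2) - a2 * x2 t * y2 t / (1 + x2 t)) t) →
        (∀ t : ℝ, 0 ≤ t → HasDerivAt y2
          (a2 * x2 t * y2 t / (1 + x2 t) - d2 * y2 t +
            ρ2 * (a2 * x2 t * y1 t * y2 t / (1 + x2 t) -
                  a1 * x1 t * y1 t * y2 t / (1 + x1 t))) t) →
        0 < x1 0 → 0 ≤ y1 0 → 0 ≤ x2 0 → 0 ≤ y2 0 →
        b ≤ liminf x1 atTop ∧ limsup x1 atTop ≤ B) ∧
    (∃ b B : ℝ, 0 < b ∧ b < B ∧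
      ∀ x1 y1 x2 y2 : ℝ → ℝ,
        (∀ t : ℝ, 0 ≤ t → HasDerivAt x1
          (x1 t * (1 - x1 t / K1) - a1 * x1 t * y1 t / (1 + x1 t)) t) →
        (∀ t : ℝ, 0 ≤ t → HasDerivAt y1
          (a1 * x1 t * y1 t / (1 + x1 t) - d1 * y1 t +
            ρ1 * (a1 * x1 t * y1 t * y2 t / (1 + x1 t) -
                  a2 * x2 t * y1 t * y2 t / (1 + x2 t))) t) →
        (∀ t : ℝ, 0 ≤ t → HasDerivAt x2
          (r * x2 t * (1 - x2 t / K2) - a2 * x2 t * y2 t / (1 + x2 t)) t) →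
        (∀ t : ℝ, 0 ≤ t → HasDerivAt y2
          (a2 * x2 t * y2 t / (1 + x2 t) - d2 * y2 t +
            ρ2 * (a2 * x2 t * y1 t * y2 t / (1 + x2 t) -
                  a1 * x1 t * y1 t * y2 t / (1 + x1 t))) t) →
        0 ≤ x1 0 → 0 ≤ y1 0 → 0 < x2 0 → 0 ≤ y2 0 →
        b ≤ liminf x2 atTop ∧ limsup x2 atTop ≤ B) := by
  constructor
  · obtain ⟨b, B, hb, hbB, h⟩ :=
      exists_le_liminf_prey one_pos hr hK1 hK2 ha1 ha2 hd1 hd2 hρ1 hρ2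
    exact ⟨b, B, hb, hbB, fun x1 y1 x2 y2 hx1 hy1 hx2 hy2 => h x1 y1 x2 y2
      ⟨fun t ht => (hx1 t ht).congr_deriv (by ring), hy1⟩
      ⟨hx2, fun t ht => (hy2 t ht).congr_deriv (by ring)⟩⟩
  · obtain ⟨b, B, hb, hbB, h⟩ :=
      exists_le_liminf_prey hr one_pos hK2 hK1 ha2 ha1 hd2 hd1 hρ2 hρ1
    exact ⟨b, B, hb, hbB, fun x1 y1 x2 y2 hx1 hy1 hx2 hy2 hx1₀ hy1₀ hx2₀ hy2₀ => h x2 y2 x1 y1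
      ⟨hx2, fun t ht => (hy2 t ht).congr_deriv (by ring)⟩
      ⟨fun t ht => (hx1 t ht).congr_deriv (by ring), hy1⟩ hx2₀ hy2₀ hx1₀ hy1₀⟩
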